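/- arXiv:2209.03571 — 2 statements merged into one kernel-verified Lean document; each statement's English description precedes it below -/
import Mathlib

section
/- Let f, g : ℝ → ℝ be functions with ∫|f| and ∫|g| finite, f(x) = 0 for all x < 0, |f(x)| ≤ M for all x, |g(x)| ≤ P for all x, and f Lipschitz with constant L on [0,∞). Then the convolution (f*g)(x) = ∫_{-∞}^{∞} f(x-z)g(z)dz is Lipschitz continuous with constant L·∫_{-∞}^{∞}|g(z)|dz + M·P. -/
/-!
Split `f (x - z) - f (y - z)` according to the signs of `x - z` and `y - z`. Where both are
nonnegative the Lipschitz bound applies and integrates against `|g|` to `L |x - y| ∫ |g|`.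
Where both are negative the difference vanishes. The signs differ only for `z` between `x` and
`y`, a set of length `|x - y|` on which the integrand is at most `M P`.
-/

open MeasureTheory Set

section SignSplit

variable {f : ℝ → ℝ} {M L : ℝ}

theorem abs_sub_comp_sub_le_add_indicator (hf0 : ∀ x < (0 : ℝ), f x = 0)
    (hfM : ∀ x, |f x| ≤ M)
    (hfL : ∀ x ≥ (0 : ℝ), ∀ y ≥ (0 : ℝ), |f x - f y| ≤ L * |x - y|) (hL : 0 ≤ L)
    (x y z : ℝ) :
    |f (x - z) - f (y - z)| ≤ L * |x - y| + (uIcc x y).indicator (fun _ => M) z := by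
  wlog hyx : y ≤ x generalizing x y
  · rw [abs_sub_comm, abs_sub_comm x, uIcc_comm]
    exact this y x (le_of_not_ge hyx)
  have hM : 0 ≤ M := (abs_nonneg _).trans (hfM 0)
  have hind : 0 ≤ (uIcc x y).indicator (fun _ => M) z := indicator_nonneg (fun _ _ => hM) z
  rcases le_or_gt z y with hzy | hyz
  · have := hfL (x - z) (by linarith) (y - z) (by linarith)
    rw [sub_sub_sub_cancel_right] at this
    linarith
  rcases le_or_gt z x with hzx | hxz
  · have hz : z ∈ uIcc x y := by rw [uIcc_of_ge hyx]; exact ⟨hyz.le, hzx⟩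
    rw [hf0 (y - z) (by linarith), sub_zero, indicator_of_mem hz]
    nlinarith [hfM (x - z), abs_nonneg (x - y)]
  · rw [hf0 (x - z) (by linarith), hf0 (y - z) (by linarith), sub_self, abs_zero]
    positivity

theorem abs_sub_comp_sub_mul_le {g : ℝ → ℝ} {P : ℝ} (hf0 : ∀ x < (0 : ℝ), f x = 0)
    (hfM : ∀ x, |f x| ≤ M) (hgP : ∀ x, |g x| ≤ P)
    (hfL : ∀ x ≥ (0 : ℝ), ∀ y ≥ (0 : ℝ), |f x - f y| ≤ L * |x - y|) (hL : 0 ≤ L)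
    (x y z : ℝ) :
    |f (x - z) * g z - f (y - z) * g z| ≤
      L * |x - y| * |g z| + (uIcc x y).indicator (fun _ => M * P) z := by
  have hM : 0 ≤ M := (abs_nonneg _).trans (hfM 0)
  have hind : (uIcc x y).indicator (fun _ => M) z * |g z| ≤
      (uIcc x y).indicator (fun _ => M * P) z := by
    by_cases hz : z ∈ uIcc x y
    · simp only [indicator_of_mem hz]
      exact mul_le_mul_of_nonneg_left (hgP z) hM
    · simp [indicator_of_notMem hz]
  calc |f (x - z) * g z - f (y - z) * g z| = |f (x - z) - f (y - z)| * |g z| := by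
        rw [← sub_mul, abs_mul]
    _ ≤ (L * |x - y| + (uIcc x y).indicator (fun _ => M) z) * |g z| :=
        mul_le_mul_of_nonneg_right
          (abs_sub_comp_sub_le_add_indicator hf0 hfM hfL hL x y z) (abs_nonneg _)
    _ ≤ L * |x - y| * |g z| + (uIcc x y).indicator (fun _ => M * P) z := by
        rw [add_mul]; gcongr

end SignSplit

theorem integrable_comp_sub_mul {f g : ℝ → ℝ} {M : ℝ} (hf : AEStronglyMeasurable f)
    (hfM : ∀ x, |f x| ≤ M) (hg : Integrable g) (a : ℝ) :
    Integrable (fun z => f (a - z) * g z) :=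
  hg.bdd_mul (hf.comp_quasiMeasurePreserving (quasiMeasurePreserving_sub_left volume a))
    (c := M) (Filter.Eventually.of_forall fun z => hfM (a - z))

theorem integrable_indicator_uIcc_const (x y K : ℝ) :
    Integrable ((uIcc x y).indicator fun _ => K) :=
  (integrable_indicator_iff measurableSet_uIcc).2 (integrableOn_const isCompact_uIcc.measure_lt_top.ne)

theorem integral_mul_abs_add_indicator_uIcc {g : ℝ → ℝ} (hg : Integrable g) (c x y K : ℝ) :
    ∫ z, (c * |g z| + (uIcc x y).indicator (fun _ => K) z) = c * (∫ z, |g z|) + K * |x - y| := by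
  rw [integral_add (hg.abs.const_mul c) (integrable_indicator_uIcc_const x y K),
    integral_const_mul, integral_indicator measurableSet_uIcc, setIntegral_const,
    Real.volume_real_interval, smul_eq_mul, abs_sub_comm y x, mul_comm K]

theorem stmt1 (f g : ℝ → ℝ) (M P L : ℝ)
    (hfint : Integrable f) (hgint : Integrable g)
    (hf0 : ∀ x < (0 : ℝ), f x = 0)
    (hfM : ∀ x, |f x| ≤ M) (hgP : ∀ x, |g x| ≤ P)
    (hfL : ∀ x ≥ (0 : ℝ), ∀ y ≥ (0 : ℝ), |f x - f y| ≤ L * |x - y|) :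
    ∀ x y : ℝ,
      |(∫ z, f (x - z) * g z) - ∫ z, f (y - z) * g z| ≤
        (L * (∫ z, |g z|) + M * P) * |x - y| := by
  intro x y
  have hL : 0 ≤ L := by simpa using (abs_nonneg _).trans (hfL 1 zero_le_one 0 le_rfl)
  have hint (a : ℝ) := integrable_comp_sub_mul hfint.aestronglyMeasurable hfM hgint a
  calc |(∫ z, f (x - z) * g z) - ∫ z, f (y - z) * g z|
      = ‖∫ z, (f (x - z) * g z - f (y - z) * g z)‖ := by
        rw [integral_sub (hint x) (hint y), Real.norm_eq_abs]
    _ ≤ ∫ z, (L * |x - y| * |g z| + (uIcc x y).indicator (fun _ => M * P) z) :=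
        norm_integral_le_of_norm_le
          ((hgint.abs.const_mul _).add (integrable_indicator_uIcc_const x y _))
          (Filter.Eventually.of_forall (abs_sub_comp_sub_mul_le hf0 hfM hgP hfL hL x y))
    _ = (L * (∫ z, |g z|) + M * P) * |x - y| := by
        rw [integral_mul_abs_add_indicator_uIcc hgint]; ring
end

section
/- Let G : [0, c_max] → ℝ be continuous and convex with global minimizer S on [0, c_max], let K ≥ 0, and suppose s = inf{z ∈ [0, S] : G(S) + K = G(z)} exists. Define J_N(x) := min over u ∈ [0, c_max - x] of G(x+u) + K·[u > 0] - c·x (with c ≥ 0). Then J_N(x) = G(S) + K - c·x for x ∈ [0, s) and J_N(x) = G(x) - c·x for x ∈ [s, c_max], and J_N is continuous on [0, c_max]. -/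
open Set

theorem stmt18 (G JN : ℝ → ℝ) (cmax S K c s : ℝ) (hcmax : 0 ≤ cmax)
    (hGcont : ContinuousOn G (Icc 0 cmax)) (hGconv : ConvexOn ℝ (Icc 0 cmax) G)
    (hS : S ∈ Icc 0 cmax) (hSmin : ∀ z ∈ Icc 0 cmax, G S ≤ G z)
    (hK : 0 ≤ K) (hc : 0 ≤ c)
    (hsmem : s ∈ Icc 0 S)
    (hsinf : s = sInf {z ∈ Icc 0 S | G S + K = G z})
    (hsne : {z ∈ Icc 0 S | G S + K = G z}.Nonempty)
    (hsval : G s = G S + K)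
    (hJN : ∀ x ∈ Icc (0 : ℝ) cmax,
      JN x = sInf ((fun u => G (x + u) + (if 0 < u then K else 0) - c * x) ''
        Icc (0 : ℝ) (cmax - x))) :
    (∀ x ∈ Ico (0 : ℝ) s, JN x = G S + K - c * x) ∧
      (∀ x ∈ Icc s cmax, JN x = G x - c * x) ∧
      ContinuousOn JN (Icc 0 cmax) := by
  have hS0 : 0 ≤ S := hS.1
  have hScm : S ≤ cmax := hS.2
  have hs0 : 0 ≤ s := hsmem.1
  have hsS : s ≤ S := hsmem.2
  -- G is nonincreasing on [0, S]
  have hdec : ∀ a b : ℝ, 0 ≤ a → a ≤ b → b ≤ S → G b ≤ G a := by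
    intro a b ha hab hbS
    rcases eq_or_lt_of_le hab with rfl | hab
    · exact le_refl _
    rcases eq_or_lt_of_le hbS with rfl | hbS
    · exact hSmin a ⟨ha, by linarith⟩
    have haS : a < S := lt_trans hab hbS
    have hz : b ∈ openSegment ℝ a S := by
      rw [openSegment_eq_Ioo haS]; exact ⟨hab, hbS⟩
    exact hGconv.le_left_of_right_le ⟨ha, by linarith⟩ hS hz
      (hSmin b ⟨by linarith, by linarith⟩)
  -- G is nondecreasing on [S, cmax]
  have hinc : ∀ a b : ℝ, S ≤ a → a ≤ b → b ≤ cmax → G a ≤ G b := by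
    intro a b hSa hab hb
    rcases eq_or_lt_of_le hab with rfl | hab
    · exact le_refl _
    rcases eq_or_lt_of_le hSa with rfl | hSa
    · exact hSmin b ⟨by linarith, hb⟩
    have hz : a ∈ openSegment ℝ S b := by
      rw [openSegment_eq_Ioo (lt_trans hSa hab)]; exact ⟨hSa, hab⟩
    exact hGconv.le_right_of_left_le hS ⟨by linarith, hb⟩ hz
      (hSmin a ⟨by linarith, by linarith⟩)
  -- key lower bound on [0, s]
  have hlow : ∀ x : ℝ, 0 ≤ x → x ≤ s → G S + K ≤ G x := by
    intro x hx hxs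
    rw [← hsval]; exact hdec x s hx hxs hsS
  -- key upper bound on [s, cmax]
  have hupp : ∀ x : ℝ, s ≤ x → x ≤ cmax → ∀ y : ℝ, x ≤ y → y ≤ cmax →
      G x ≤ G y + K := by
    intro x hsx hxcm y hxy hycm
    rcases le_total x S with hxS | hSx
    · have h1 : G x ≤ G s := hdec s x hs0 hsx hxS
      have h2 : G S ≤ G y := hSmin y ⟨by linarith, hycm⟩
      rw [hsval] at h1; linarith
    · have := hinc x y hSx hxy hycm; linarith
  -- formula on [0, s)
  have case1 : ∀ x ∈ Ico (0 : ℝ) s, JN x = G S + K - c * x := by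
    intro x ⟨hx0, hxs⟩
    have hxcm : x ≤ cmax := by linarith
    rw [hJN x ⟨hx0, hxcm⟩]
    apply IsLeast.csInf_eq
    constructor
    · refine ⟨S - x, ⟨by linarith, by linarith⟩, ?_⟩
      have : (0:ℝ) < S - x := by linarith
      simp only [this, if_pos]
      ring_nf
    · rintro v ⟨u, ⟨hu0, hucm⟩, rfl⟩
      by_cases hu : 0 < u
      · simp only [if_pos hu]
        have : G S ≤ G (x + u) := hSmin _ ⟨by linarith, by linarith⟩
        linarith
      · have hu' : u = 0 := le_antisymm (not_lt.1 hu) hu0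
        subst hu'
        simp only [lt_irrefl, if_false, add_zero]
        have := hlow x hx0 (le_of_lt hxs)
        linarith
  -- formula on [s, cmax]
  have case2 : ∀ x ∈ Icc s cmax, JN x = G x - c * x := by
    intro x ⟨hsx, hxcm⟩
    have hx0 : 0 ≤ x := le_trans hs0 hsx
    rw [hJN x ⟨hx0, hxcm⟩]
    apply IsLeast.csInf_eq
    constructor
    · exact ⟨0, ⟨le_refl _, by linarith⟩, by simp⟩
    · rintro v ⟨u, ⟨hu0, hucm⟩, rfl⟩
      by_cases hu : 0 < u
      · simp only [if_pos hu]
        have := hupp x hsx hxcm (x + u) (by linarith) (by linarith)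
        linarith
      · have hu' : u = 0 := le_antisymm (not_lt.1 hu) hu0
        subst hu'
        simp
  refine ⟨case1, case2, ?_⟩
  -- continuity: JN x = G (max x s) - c * x on [0, cmax]
  have heq : ∀ x ∈ Icc (0:ℝ) cmax, JN x = G (max x s) - c * x := by
    intro x ⟨hx0, hxcm⟩
    rcases lt_or_ge x s with h | h
    · rw [max_eq_right h.le, case1 x ⟨hx0, h⟩, hsval]
    · rw [max_eq_left h, case2 x ⟨h, hxcm⟩]
  have hcont : ContinuousOn (fun x => G (max x s) - c * x) (Icc 0 cmax) := by
    apply ContinuousOn.sub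
    · apply hGcont.comp (Continuous.continuousOn (by continuity))
      intro x ⟨hx0, hxcm⟩
      exact ⟨le_max_of_le_left hx0, max_le hxcm (by linarith)⟩
    · exact (continuous_const.mul continuous_id).continuousOn
  exact hcont.congr heq
end
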